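/- If Ē(x,y) = 0 for x, y ∈ X, then ω̂_T(x) = ω̂_T(y). -/
import Mathlib


open Filter MeasureTheory Topology BoundedContinuousFunction
open scoped ENNReal NNReal

noncomputable def EnDist {X : Type*} [MetricSpace X] (T : X → X) (n : ℕ) (x y : X) : ℝ :=
  ⨅ σ : Equiv.Perm (Fin n), (1 / (n : ℝ)) * ∑ k : Fin n, dist (T^[(k : ℕ)] x) (T^[((σ k) : ℕ)] y)

/-- The mean orbital pseudo-metric `Ē(x,y) = limsup_n Ē_n(x,y)`. -/
noncomputable def Ebar {X : Type*} [MetricSpace X] (T : X → X) (x y : X) : ℝ :=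
  Filter.limsup (fun n => EnDist T n x y) Filter.atTop

/-- The empirical measure `m_T(x,n) = (1/n) Σ_{j<n} δ_{T^j x}`. -/
noncomputable def empMeas {X : Type*} [MeasurableSpace X] (T : X → X) (x : X) (n : ℕ) :
    Measure X :=
  ((n : ℝ≥0∞))⁻¹ • ∑ j ∈ Finset.range n, MeasureTheory.Measure.dirac (T^[j] x)

/-- The empirical measure `m_T(x,n+1)` as a probability measure; the sequence
`n ↦ empProb T x n` is the sequence of empirical measures of `x`. -/
noncomputable def empProb {X : Type*} [MeasurableSpace X] (T : X → X) (x : X) (n : ℕ) :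
    ProbabilityMeasure X :=
  ⟨empMeas T x (n + 1), by
    constructor
    rw [empMeas, Measure.smul_apply, Measure.finset_sum_apply]
    simp only [measure_univ, Finset.sum_const, Finset.card_range, nsmul_eq_mul, mul_one,
      smul_eq_mul]
    rw [ENNReal.inv_mul_cancel (by exact_mod_cast Nat.succ_ne_zero n) (by simp)]⟩

/-- `ω̂_T(x)`: the set of measures quasi-generated by `x`, i.e. the weak* limit points of
the sequence of empirical measures of `x`. -/
noncomputable def omegaHat {X : Type*} [MetricSpace X] [MeasurableSpace X]
    [OpensMeasurableSpace X] (T : X → X) (x : X) : Set (ProbabilityMeasure X) :=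
  {μ | MapClusterPt μ Filter.atTop (empProb T x)}

/-- The Prokhorov metric on probability measures. -/
noncomputable def rhoP {X : Type*} [MetricSpace X] [MeasurableSpace X]
    (μ ν : ProbabilityMeasure X) : ℝ :=
  levyProkhorovDist μ.toMeasure ν.toMeasure

/-- The Hausdorff distance induced by the Prokhorov metric. -/
noncomputable def rhoH {X : Type*} [MetricSpace X] [MeasurableSpace X]
    (A B : Set (ProbabilityMeasure X)) : ℝ :=
  max (sSup ((fun μ => sInf ((fun ν => rhoP μ ν) '' B)) '' A)) (sSup ((fun ν => sInf ((fun μ => rhoP μ ν) '' A)) '' B))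


section AuxLemmas

open BoundedContinuousFunction

variable {X : Type*} [MetricSpace X] [CompactSpace X] [MeasurableSpace X] [BorelSpace X]

omit [CompactSpace X] [MeasurableSpace X] [BorelSpace X] in
lemma EnDist_nonneg' (T : X → X) (n : ℕ) (x y : X) : 0 ≤ EnDist T n x y :=
  le_ciInf fun σ => by positivity

omit [CompactSpace X] [MeasurableSpace X] [BorelSpace X] in
lemma EnDist_le' (T : X → X) {n : ℕ} (x y : X) {C : ℝ} (hC : 0 ≤ C)
    (hd : ∀ a b : X, dist a b ≤ C) : EnDist T n x y ≤ C := by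
  rcases Nat.eq_zero_or_pos n with hn | hn
  · subst hn
    refine ciInf_le_of_le (Finite.bddBelow_range _) (Equiv.refl _) ?_
    simp [EnDist, hC]
  · refine ciInf_le_of_le (Finite.bddBelow_range _) (Equiv.refl _) ?_
    have hs : ∑ k : Fin n, dist (T^[(k : ℕ)] x) (T^[((Equiv.refl (Fin n)) k : ℕ)] y)
        ≤ ∑ _k : Fin n, C := Finset.sum_le_sum fun k _ => hd _ _
    have h2 : (∑ _k : Fin n, C) = (n : ℝ) * C := by
      simp [Finset.sum_const, mul_comm]
    have hn' : (0:ℝ) < (n:ℝ) := by exact_mod_cast hn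
    calc (1 / (n : ℝ)) * ∑ k : Fin n, dist (T^[(k : ℕ)] x) (T^[((Equiv.refl (Fin n)) k : ℕ)] y)
        ≤ (1 / (n : ℝ)) * ((n:ℝ) * C) := by
          rw [← h2]; exact mul_le_mul_of_nonneg_left hs (by positivity)
      _ = C := by field_simp

omit [MeasurableSpace X] [BorelSpace X] in
lemma tendsto_EnDist (T : X → X) (x y : X) (h : Ebar T x y = 0) :
    Tendsto (fun n => EnDist T n x y) atTop (𝓝 0) := by
  rw [Ebar] at h
  obtain ⟨C, hC0, hC⟩ : ∃ C : ℝ, 0 ≤ C ∧ ∀ a b : X, dist a b ≤ C := by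
    obtain ⟨C, hC⟩ := Metric.isBounded_iff.1 (isCompact_univ : IsCompact (Set.univ : Set X)).isBounded
    exact ⟨max C 0, le_max_right _ _,
      fun a b => (hC (Set.mem_univ a) (Set.mem_univ b)).trans (le_max_left _ _)⟩
  have hbdd : IsBoundedUnder (· ≤ ·) atTop (fun n => EnDist T n x y) :=
    isBoundedUnder_of ⟨C, fun n => EnDist_le' T x y hC0 hC⟩
  have hbdd2 : IsBoundedUnder (· ≥ ·) atTop (fun n => EnDist T n x y) :=
    isBoundedUnder_of ⟨0, fun n => EnDist_nonneg' T n x y⟩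
  have hliminf : liminf (fun n => EnDist T n x y) atTop = 0 := by
    apply le_antisymm
    · rw [← h]; exact liminf_le_limsup hbdd hbdd2
    · exact le_liminf_of_le hbdd.isCoboundedUnder_ge
        (Filter.Eventually.of_forall fun n => EnDist_nonneg' T n x y)
  exact tendsto_of_liminf_eq_limsup hliminf h hbdd hbdd2

/-- average of f along orbit -/
noncomputable def avgF (T : X → X) (f : X →ᵇ ℝ) (z : X) (n : ℕ) : ℝ :=
  (1 / (n : ℝ)) * ∑ j ∈ Finset.range n, f (T^[j] z)

omit [CompactSpace X] [MeasurableSpace X] [BorelSpace X] in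
lemma avg_diff_le (T : X → X) (f : X →ᵇ ℝ) {ε δ : ℝ} (hδ : 0 < δ)
    (hu : ∀ a b : X, dist a b < δ → dist (f a) (f b) < ε) {n : ℕ} (hn : 0 < n) (x y : X) :
    |avgF T f x n - avgF T f y n| ≤ ε + ((2 * ‖f‖ + 1) / δ) * EnDist T n x y := by
  set c : ℝ := (2 * ‖f‖ + 1) / δ with hcdef
  have hf0 : (0:ℝ) ≤ ‖f‖ := norm_nonneg f
  have hcpos : 0 < c := by positivity
  have hεpos : 0 < ε := by
    have := hu x x (by simpa using hδ); simpa using this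
  have hptw : ∀ a b : X, |f a - f b| ≤ ε + c * dist a b := by
    intro a b
    rcases lt_or_ge (dist a b) δ with hlt | hge
    · have h1 := (hu a b hlt).le
      rw [Real.dist_eq] at h1
      have h2 : 0 ≤ c * dist a b := mul_nonneg hcpos.le dist_nonneg
      linarith
    · have h1 : |f a - f b| ≤ 2 * ‖f‖ := by
        have := f.dist_le_two_norm a b
        rwa [Real.dist_eq] at this
      have h2 : (2 * ‖f‖ + 1) ≤ c * dist a b := by
        rw [hcdef, div_mul_eq_mul_div, le_div_iff₀ hδ]
        nlinarith
      linarith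
  have hn' : (0:ℝ) < (n:ℝ) := by exact_mod_cast hn
  have key : ∀ σ : Equiv.Perm (Fin n), |avgF T f x n - avgF T f y n|
      ≤ ε + c * ((1 / (n : ℝ)) * ∑ k : Fin n, dist (T^[(k : ℕ)] x) (T^[((σ k) : ℕ)] y)) := by
    intro σ
    have h1 : ∑ j ∈ Finset.range n, (f (T^[j] x) : ℝ) = ∑ k : Fin n, f (T^[(k : ℕ)] x) :=
      (Fin.sum_univ_eq_sum_range _ n).symm
    have h2 : ∑ j ∈ Finset.range n, (f (T^[j] y) : ℝ) = ∑ k : Fin n, f (T^[((σ k) : ℕ)] y) := by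
      rw [Equiv.sum_comp σ (fun k : Fin n => (f (T^[(k : ℕ)] y) : ℝ))]
      exact (Fin.sum_univ_eq_sum_range _ n).symm
    have hrw : avgF T f x n - avgF T f y n
        = (1 / (n : ℝ)) * ∑ k : Fin n, (f (T^[(k : ℕ)] x) - f (T^[((σ k) : ℕ)] y)) := by
      rw [avgF, avgF, h1, h2, ← mul_sub, ← Finset.sum_sub_distrib]
    rw [hrw, abs_mul, abs_of_nonneg (by positivity : (0:ℝ) ≤ 1 / (n:ℝ))]
    calc (1 / (n:ℝ)) * |∑ k : Fin n, (f (T^[(k : ℕ)] x) - f (T^[((σ k) : ℕ)] y))|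
        ≤ (1 / (n:ℝ)) * ∑ k : Fin n, |f (T^[(k : ℕ)] x) - f (T^[((σ k) : ℕ)] y)| := by
          exact mul_le_mul_of_nonneg_left (Finset.abs_sum_le_sum_abs _ _) (by positivity)
      _ ≤ (1 / (n:ℝ)) * ∑ k : Fin n, (ε + c * dist (T^[(k : ℕ)] x) (T^[((σ k) : ℕ)] y)) := by
          exact mul_le_mul_of_nonneg_left (Finset.sum_le_sum fun k _ => hptw _ _) (by positivity)
      _ = ε + c * ((1 / (n : ℝ)) * ∑ k : Fin n, dist (T^[(k : ℕ)] x) (T^[((σ k) : ℕ)] y)) := by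
          rw [Finset.sum_add_distrib, Finset.sum_const, Finset.card_univ, Fintype.card_fin,
            nsmul_eq_mul, mul_add, ← Finset.mul_sum]
          have hne : (1 / (n:ℝ)) * ((n:ℝ) * ε) = ε := by field_simp
          rw [hne]; ring
  have hdiv : (|avgF T f x n - avgF T f y n| - ε) / c ≤ EnDist T n x y := by
    refine le_ciInf fun σ => ?_
    rw [div_le_iff₀ hcpos]
    have := key σ
    linarith [mul_comm ((1 / (n : ℝ)) * ∑ k : Fin n, dist (T^[(k : ℕ)] x) (T^[((σ k) : ℕ)] y)) c]
  rw [div_le_iff₀ hcpos] at hdiv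
  linarith [mul_comm (EnDist T n x y) c]

lemma avg_tendsto (T : X → X) (x y : X) (h : Ebar T x y = 0) (f : X →ᵇ ℝ) :
    Tendsto (fun n => avgF T f x n - avgF T f y n) atTop (𝓝 0) := by
  have hE := tendsto_EnDist T x y h
  rw [NormedAddCommGroup.tendsto_nhds_zero]
  intro ε hε
  have huc : UniformContinuous f := CompactSpace.uniformContinuous_of_continuous f.continuous
  rw [Metric.uniformContinuous_iff] at huc
  obtain ⟨δ, hδ, hu⟩ := huc (ε / 3) (by linarith)
  have hcpos : (0:ℝ) < (2 * ‖f‖ + 1) / δ := by positivity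
  have h1 : ∀ᶠ n in atTop, ((2 * ‖f‖ + 1) / δ) * EnDist T n x y < ε / 3 := by
    have h2 : Tendsto (fun n => ((2 * ‖f‖ + 1) / δ) * EnDist T n x y) atTop (𝓝 0) := by
      simpa using hE.const_mul ((2 * ‖f‖ + 1) / δ)
    exact h2.eventually_lt_const (by linarith)
  filter_upwards [h1, eventually_ge_atTop 1] with n hn1 hn2
  have hb := avg_diff_le T f hδ (fun a b hab => hu hab) (show 0 < n from hn2) x y
  rw [Real.norm_eq_abs]
  linarith

omit [CompactSpace X] in
lemma integral_empProb (T : X → X) (hT : Continuous T) (z : X) (f : X →ᵇ ℝ) (n : ℕ) :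
    ∫ ω, f ω ∂((empProb T z n : Measure X)) = avgF T f z (n + 1) := by
  show ∫ ω, f ω ∂(empMeas T z (n + 1)) = _
  rw [empMeas, integral_smul_measure,
    integral_finset_sum_measure (fun j _ => f.integrable _)]
  have hd : ∀ j, ∫ ω, f ω ∂(Measure.dirac (T^[j] z)) = f (T^[j] z) := fun j =>
    integral_dirac _ _
  simp only [hd]
  rw [avgF, ENNReal.toReal_inv, ENNReal.toReal_natCast, smul_eq_mul, inv_eq_one_div]

lemma omegaHat_subset (T : X → X) (x y : X)
    (hdiff : ∀ f : X →ᵇ ℝ, Tendsto (fun n =>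
      (∫ ω, f ω ∂((empProb T x n : Measure X))) - ∫ ω, f ω ∂((empProb T y n : Measure X)))
      atTop (𝓝 0)) : omegaHat T x ⊆ omegaHat T y := by
  intro μ hμ
  simp only [omegaHat, Set.mem_setOf_eq, mapClusterPt_iff_ultrafilter] at hμ ⊢
  obtain ⟨U, hU, hconv⟩ := hμ
  refine ⟨U, hU, ?_⟩
  rw [MeasureTheory.ProbabilityMeasure.tendsto_iff_forall_integral_tendsto] at hconv ⊢
  intro f
  have h1 := hconv f
  have h2 : Tendsto (fun n =>
      (∫ ω, f ω ∂((empProb T x n : Measure X))) - ∫ ω, f ω ∂((empProb T y n : Measure X)))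
      U (𝓝 0) := (hdiff f).mono_left hU
  have h3 := h1.sub h2
  simpa using h3

end AuxLemmas

/-- if `Ē(x,y) = 0` then `ω̂_T(x) = ω̂_T(y)`. -/
theorem omegaHat_eq_of_Ebar_eq_zero {X : Type*} [MetricSpace X] [CompactSpace X]
    [MeasurableSpace X] [BorelSpace X] (T : X → X) (hT : Continuous T)
    (x y : X) (h : Ebar T x y = 0) : omegaHat T x = omegaHat T y := by
  have hd : ∀ f : X →ᵇ ℝ, Tendsto (fun n =>
      (∫ ω, f ω ∂((empProb T x n : Measure X))) - ∫ ω, f ω ∂((empProb T y n : Measure X)))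
      atTop (𝓝 0) := by
    intro f
    have h0 := (avg_tendsto T x y h f).comp (tendsto_add_atTop_nat 1)
    have heq : (fun n => (∫ ω, f ω ∂((empProb T x n : Measure X)))
        - ∫ ω, f ω ∂((empProb T y n : Measure X)))
        = fun n => avgF T f x (n + 1) - avgF T f y (n + 1) := by
      funext n; rw [integral_empProb T hT x f n, integral_empProb T hT y f n]
    rw [heq]
    exact h0
  refine Set.Subset.antisymm (omegaHat_subset T x y hd) (omegaHat_subset T y x ?_)
  intro f
  have := (hd f).neg
  simpa [neg_sub] using this
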